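/- arXiv:2507.06737 — 2 statements merged into one kernel-verified Lean document; each statement's English description precedes it below -/
import Mathlib

section
/- Let f_i be convex differentiable with L-Lipschitz gradient and g_i convex, F_i = f_i + g_i, i = 1,…,m. Let x_{k+1} minimize φ_{1/s_k}(·; x_k, y_k) with 0 < s_k ≤ 1/L, and suppose the KKT conditions hold with multipliers λ ∈ Δ^m and subgradients g̃_i ∈ ∂g_i(x_{k+1}) satisfying ∑_i λ_i(∇f_i(y_k) + g̃_i) = −(1/s_k)(x_{k+1} − y_k). Then for every z ∈ ℝ^n, min_i (F_i(x_{k+1}) − F_i(z)) ≤ (1/(2s_k))[2⟨y_k − x_{k+1}, y_k − z⟩ − ‖x_{k+1} − y_k‖²]. -/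
/-!
For each objective, the descent lemma bounds `f i x₁` above by the linearization of `f i` at `yk`
plus `(L / 2) ‖x₁ - yk‖²`, convexity bounds `f i z` below by the same linearization, and the
subgradient inequality compares `g i x₁` with `g i z`. Hence
`F i x₁ - F i z ≤ ⟪∇f i yk + gt i, x₁ - z⟫ + ‖x₁ - yk‖² / (2s)`. The minimum over `i` is at most
the `lam`-average, and the KKT condition turns the averaged inner product into
`-⟪x₁ - yk, x₁ - z⟫ / s`, which rearranges to the claim.
-/

open InnerProductSpace Set Finset

section Gradient

variable {E : Type*} [NormedAddCommGroup E] [InnerProductSpace ℝ E] [CompleteSpace E]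
  {f : E → ℝ}

theorem HasGradientAt.hasDerivAt_comp_add_smul {f' y v : E} {t : ℝ}
    (hf : HasGradientAt f f' (y + t • v)) :
    HasDerivAt (fun t : ℝ ↦ f (y + t • v)) ⟪f', v⟫_ℝ t := by
  have hline : HasDerivAt (fun t : ℝ ↦ y + t • v) v t := by
    simpa using ((hasDerivAt_id t).smul_const v).const_add y
  have := hf.hasFDerivAt.comp_hasDerivAt t hline
  rwa [toDual_apply_apply] at this

theorem ConvexOn.add_inner_le_of_hasGradientAt {f' y : E} (hconv : ConvexOn ℝ univ f)
    (hf : HasGradientAt f f' y) (z : E) :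
    f y + ⟪f', z - y⟫_ℝ ≤ f z := by
  have hline : ConvexOn ℝ univ (fun t : ℝ ↦ f (y + t • (z - y))) := by
    simpa [Function.comp_def, AffineMap.lineMap_apply, add_comm]
      using hconv.comp_affineMap (AffineMap.lineMap y z)
  have hderiv := HasGradientAt.hasDerivAt_comp_add_smul (t := 0) (v := z - y)
    (by simpa using hf)
  have := hline.le_slope_of_hasDerivAt (mem_univ 0) (mem_univ 1) zero_lt_one hderiv
  simp only [slope_def_field, zero_smul, add_zero, one_smul, add_sub_cancel, sub_zero,
    div_one] at this
  linarith

theorem le_add_inner_add_sq_of_lipschitz_gradient {f' : E → E} {L : ℝ}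
    (hf : ∀ x, HasGradientAt f (f' x) x) (hlip : ∀ x y, ‖f' x - f' y‖ ≤ L * ‖x - y‖)
    (x y : E) :
    f x ≤ f y + ⟪f' y, x - y⟫_ℝ + L / 2 * ‖x - y‖ ^ 2 := by
  set v := x - y
  have hderiv (t : ℝ) : HasDerivAt (fun t : ℝ ↦ f (y + t • v)) ⟪f' (y + t • v), v⟫_ℝ t :=
    (hf _).hasDerivAt_comp_add_smul
  have hbound (t : ℝ) : HasDerivAt (fun t : ℝ ↦ f y + t * ⟪f' y, v⟫_ℝ + L / 2 * t ^ 2 * ‖v‖ ^ 2)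
      (⟪f' y, v⟫_ℝ + L * t * ‖v‖ ^ 2) t := by
    have := (((hasDerivAt_id t).mul_const ⟪f' y, v⟫_ℝ).const_add (f y)).add
      (((hasDerivAt_pow 2 t).const_mul (L / 2)).mul_const (‖v‖ ^ 2))
    exact this.congr_deriv (by simp only [Nat.cast_ofNat, Nat.add_one_sub_one, pow_one]; ring)
  have hslope (t : ℝ) (ht : t ∈ Ico (0 : ℝ) 1) :
      ⟪f' (y + t • v), v⟫_ℝ ≤ ⟪f' y, v⟫_ℝ + L * t * ‖v‖ ^ 2 :=
    calc ⟪f' (y + t • v), v⟫_ℝ = ⟪f' y, v⟫_ℝ + ⟪f' (y + t • v) - f' y, v⟫_ℝ := by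
          rw [inner_sub_left]; ring
      _ ≤ ⟪f' y, v⟫_ℝ + ‖f' (y + t • v) - f' y‖ * ‖v‖ := by
          gcongr; exact real_inner_le_norm _ _
      _ ≤ ⟪f' y, v⟫_ℝ + L * ‖t • v‖ * ‖v‖ := by
          gcongr; simpa using hlip (y + t • v) y
      _ = ⟪f' y, v⟫_ℝ + L * t * ‖v‖ ^ 2 := by
          rw [norm_smul, Real.norm_of_nonneg ht.1]; ring
  have := image_le_of_deriv_right_le_deriv_boundary
    (fun t _ ↦ (hderiv t).continuousAt.continuousWithinAt)
    (fun t _ ↦ (hderiv t).hasDerivWithinAt) (by simp)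
    (fun t _ ↦ (hbound t).continuousAt.continuousWithinAt)
    (fun t _ ↦ (hbound t).hasDerivWithinAt) hslope (right_mem_Icc.2 zero_le_one)
  simpa [v] using this

theorem add_sub_add_le_inner_add_sq_of_lipschitz_gradient {g : E → ℝ} {f' : E → E} {L : ℝ}
    {u x y : E} (hf : ∀ x, HasGradientAt f (f' x) x) (hconv : ConvexOn ℝ univ f)
    (hlip : ∀ x y, ‖f' x - f' y‖ ≤ L * ‖x - y‖) (hsub : ∀ w, g x + ⟪u, w - x⟫_ℝ ≤ g w) (z : E) :
    f x + g x - (f z + g z) ≤ ⟪f' y + u, x - z⟫_ℝ + L / 2 * ‖x - y‖ ^ 2 := by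
  have hupper := le_add_inner_add_sq_of_lipschitz_gradient hf hlip x y
  have hlower := hconv.add_inner_le_of_hasGradientAt (hf y) z
  have hsubz := hsub z
  have hf' : ⟪f' y, x - y⟫_ℝ - ⟪f' y, z - y⟫_ℝ = ⟪f' y, x - z⟫_ℝ := by
    rw [← inner_sub_right, sub_sub_sub_cancel_right]
  have hu : ⟪u, z - x⟫_ℝ = -⟪u, x - z⟫_ℝ := by rw [← inner_neg_right, neg_sub]
  rw [inner_add_left]
  linarith

end Gradient

theorem ciInf_le_sum_mul {ι : Type*} [Fintype ι] (a w : ι → ℝ) (hw : ∀ i, 0 ≤ w i)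
    (hw1 : ∑ i, w i = 1) : ⨅ i, a i ≤ ∑ i, w i * a i :=
  calc ⨅ i, a i = ∑ i, w i * ⨅ j, a j := by rw [← sum_mul, hw1, one_mul]
    _ ≤ ∑ i, w i * a i := sum_le_sum fun i _ ↦
      mul_le_mul_of_nonneg_left (ciInf_le (finite_range a).bddBelow i) (hw i)

theorem stmt_18_general (n m : ℕ) (L : ℝ)
    (f g : Fin m → EuclideanSpace ℝ (Fin n) → ℝ)
    (f' : Fin m → EuclideanSpace ℝ (Fin n) → EuclideanSpace ℝ (Fin n))
    (hf : ∀ i x, HasGradientAt (f i) (f' i x) x)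
    (hfconv : ∀ i, ConvexOn ℝ Set.univ (f i))
    (hlip : ∀ i x y, ‖f' i x - f' i y‖ ≤ L * ‖x - y‖)
    (F : Fin m → EuclideanSpace ℝ (Fin n) → ℝ) (hF : ∀ i x, F i x = f i x + g i x)
    (s : ℝ) (hs0 : 0 < s) (hsL : s ≤ 1 / L)
    (yk x₁ : EuclideanSpace ℝ (Fin n))
    (lam : Fin m → ℝ) (hlam : ∀ i, 0 ≤ lam i) (hlamsum : ∑ i, lam i = 1)
    (gt : Fin m → EuclideanSpace ℝ (Fin n))
    (hsub : ∀ i w, g i x₁ + (inner ℝ (gt i) (w - x₁) : ℝ) ≤ g i w)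
    (hkkt : ∑ i, lam i • (f' i yk + gt i) = -(1 / s) • (x₁ - yk)) :
    ∀ z : EuclideanSpace ℝ (Fin n),
      (⨅ i : Fin m, (F i x₁ - F i z)) ≤
        (1 / (2 * s)) * (2 * (inner ℝ (yk - x₁) (yk - z) : ℝ) - ‖x₁ - yk‖ ^ 2) := by
  intro z
  have hLs : L / 2 ≤ 1 / (2 * s) := by
    rcases le_or_gt L 0 with hL | hL
    · have : 0 < 1 / (2 * s) := by positivity
      linarith
    · rw [div_le_div_iff₀ two_pos (by positivity)]
      nlinarith [(le_div_iff₀ hL).1 hsL]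
  have hstep (i : Fin m) : F i x₁ - F i z ≤
      ⟪f' i yk + gt i, x₁ - z⟫_ℝ + 1 / (2 * s) * ‖x₁ - yk‖ ^ 2 := by
    rw [hF, hF]
    grw [add_sub_add_le_inner_add_sq_of_lipschitz_gradient (y := yk) (hf i) (hfconv i) (hlip i)
      (hsub i) z, hLs]
  have hsplit : ⟪x₁ - yk, x₁ - z⟫_ℝ = ‖x₁ - yk‖ ^ 2 - ⟪yk - x₁, yk - z⟫_ℝ := by
    rw [← sub_add_sub_cancel x₁ yk z, inner_add_right, real_inner_self_eq_norm_sq,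
      ← neg_sub yk x₁, inner_neg_left]
    ring
  calc ⨅ i, (F i x₁ - F i z) ≤ ∑ i, lam i * (F i x₁ - F i z) := ciInf_le_sum_mul _ _ hlam hlamsum
    _ ≤ ∑ i, lam i * (⟪f' i yk + gt i, x₁ - z⟫_ℝ + 1 / (2 * s) * ‖x₁ - yk‖ ^ 2) := by
      gcongr with i; exacts [hlam i, hstep i]
    _ = ⟪∑ i, lam i • (f' i yk + gt i), x₁ - z⟫_ℝ + 1 / (2 * s) * ‖x₁ - yk‖ ^ 2 := by
      simp only [mul_add, sum_add_distrib, ← sum_mul, hlamsum, one_mul, sum_inner,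
        real_inner_smul_left]
    _ = 1 / (2 * s) * (2 * ⟪yk - x₁, yk - z⟫_ℝ - ‖x₁ - yk‖ ^ 2) := by
      rw [hkkt, real_inner_smul_left, hsplit]
      field_simp
      ring

theorem stmt_18 (n m : ℕ) (hm : 0 < m) (L : ℝ) (hL : 0 < L)
    (f g : Fin m → EuclideanSpace ℝ (Fin n) → ℝ)
    (f' : Fin m → EuclideanSpace ℝ (Fin n) → EuclideanSpace ℝ (Fin n))
    (hf : ∀ i x, HasGradientAt (f i) (f' i x) x)
    (hfconv : ∀ i, ConvexOn ℝ Set.univ (f i))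
    (hlip : ∀ i x y, ‖f' i x - f' i y‖ ≤ L * ‖x - y‖)
    (hg : ∀ i, ConvexOn ℝ Set.univ (g i))
    (F : Fin m → EuclideanSpace ℝ (Fin n) → ℝ) (hF : ∀ i x, F i x = f i x + g i x)
    (s : ℝ) (hs0 : 0 < s) (hsL : s ≤ 1 / L)
    (xk yk x₁ : EuclideanSpace ℝ (Fin n))
    (φ : EuclideanSpace ℝ (Fin n) → ℝ)
    (hφ : ∀ z, φ z = (⨆ i : Fin m, ((inner ℝ (f' i yk) (z - yk) : ℝ) + g i z + f i yk - F i xk))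
        + (1 / (2 * s)) * ‖z - yk‖ ^ 2)
    (hmin : ∀ w, φ x₁ ≤ φ w)
    (lam : Fin m → ℝ) (hlam : ∀ i, 0 ≤ lam i) (hlamsum : ∑ i, lam i = 1)
    (gt : Fin m → EuclideanSpace ℝ (Fin n))
    (hsub : ∀ i w, g i x₁ + (inner ℝ (gt i) (w - x₁) : ℝ) ≤ g i w)
    (hkkt : ∑ i, lam i • (f' i yk + gt i) = -(1 / s) • (x₁ - yk)) :
    ∀ z : EuclideanSpace ℝ (Fin n),
      (⨅ i : Fin m, (F i x₁ - F i z)) ≤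
        (1 / (2 * s)) * (2 * (inner ℝ (yk - x₁) (yk - z) : ℝ) - ‖x₁ - yk‖ ^ 2) :=
  stmt_18_general n m L f g f' hf hfconv hlip F hF s hs0 hsL yk x₁ lam hlam hlamsum gt hsub hkkt
end

section
/- Under the same hypotheses as the previous statement (x_{k+1} the proximal subproblem minimizer with step s_k ≤ 1/L and KKT multipliers λ ∈ Δ^m supported on the active index set), for every z ∈ ℝ^n: min_i (F_i(x_k) − F_i(z)) − min_i (F_i(x_{k+1}) − F_i(z)) ≥ −(1/(2s_k))[2⟨y_k − x_{k+1}, y_k − x_k⟩ + ‖x_{k+1} − y_k‖²]. -/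
/-!
Put `c = 1 / (2 s)` and `ψ = max_i Θ_i`, with
`Θ_i w = ⟪∇f_i(y_k), w - y_k⟫ + g_i w + f_i(y_k) - F_i(x_k)`, so that `φ = ψ + c ‖· - y_k‖²`.
The descent lemma and `s ≤ 1 / L` give `F_i(x₁) - F_i(x_k) ≤ Θ_i(x₁) + c ‖x₁ - y_k‖² ≤ φ(x₁)`.
As `ψ` is convex, `φ` is `2c`-strongly convex, so its minimiser satisfies
`φ(x₁) + c ‖x_k - x₁‖² ≤ φ(x_k)`, and `φ(x_k) ≤ c ‖x_k - y_k‖²` because convexity of the `f_i`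
makes `ψ(x_k) ≤ 0`. Expanding the squares,
`F_i(x₁) - F_i(x_k) ≤ c (2 ⟪y_k - x₁, y_k - x_k⟫ - ‖x₁ - y_k‖²)`, and taking minima over `i`
gives the claim.
-/

open Set Filter Topology AffineMap

variable {E : Type*} [NormedAddCommGroup E] [InnerProductSpace ℝ E]

lemma convexOn_inner_sub (a y : E) : ConvexOn ℝ univ fun w => inner ℝ a (w - y) := by
  have h : (fun w => inner ℝ a (w - y)) = fun w => innerₛₗ ℝ a w + -inner ℝ a y := by
    ext w
    simp [sub_eq_add_neg, inner_add_right, inner_neg_right]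
  rw [h]
  exact ((innerₛₗ ℝ a).convexOn convex_univ).add_const _

lemma ConvexOn.ciSup {ι : Type*} [Finite ι] [Nonempty ι] {s : Set E} {f : ι → E → ℝ}
    (hf : ∀ i, ConvexOn ℝ s (f i)) : ConvexOn ℝ s fun x => ⨆ i, f i x := by
  refine ⟨(hf (Classical.arbitrary ι)).1, fun x hx y hy a b ha hb hab => ciSup_le fun i => ?_⟩
  refine ((hf i).2 hx hy ha hb hab).trans ?_
  simp only [smul_eq_mul]
  gcongr
  · exact le_ciSup (f := fun j => f j x) (Set.finite_range _).bddAbove i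
  · exact le_ciSup (f := fun j => f j y) (Set.finite_range _).bddAbove i

lemma ConvexOn.strongConvexOn_add_sq_norm_sub {s : Set E} {ψ : E → ℝ} (hψ : ConvexOn ℝ s ψ)
    (c : ℝ) (y : E) : StrongConvexOn s (2 * c) fun x => ψ x + c * ‖x - y‖ ^ 2 := by
  rw [strongConvexOn_iff_convex]
  have hquad : (fun x => ψ x + c * ‖x - y‖ ^ 2 - 2 * c / 2 * ‖x‖ ^ 2) =
      fun x => ψ x + ((-(2 * c)) • innerₛₗ ℝ y) x + c * ‖y‖ ^ 2 := by
    ext x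
    simp only [LinearMap.smul_apply, innerₛₗ_apply_apply, smul_eq_mul, norm_sub_sq_real,
      real_inner_comm]
    ring
  rw [hquad]
  exact (hψ.add (LinearMap.convexOn _ hψ.1)).add_const _

lemma StrongConvexOn.add_sq_norm_sub_le_of_isMinOn {s : Set E} {φ : E → ℝ} {m : ℝ}
    {x₁ x : E} (hφ : StrongConvexOn s m φ) (hx₁ : x₁ ∈ s) (hmin : IsMinOn φ s x₁) (hx : x ∈ s) :
    φ x₁ + m / 2 * ‖x - x₁‖ ^ 2 ≤ φ x := by
  set D := m / 2 * ‖x₁ - x‖ ^ 2 with hD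
  have hsegment : ∀ t ∈ Ioo (0 : ℝ) 1, φ x₁ ≤ φ x - (1 - t) * D := by
    intro t ht
    have hconv := hφ.2 hx₁ hx (sub_nonneg.2 ht.2.le) ht.1.le (sub_add_cancel 1 t)
    have hle := hmin (hφ.1 hx₁ hx (sub_nonneg.2 ht.2.le) ht.1.le (sub_add_cancel 1 t))
    simp only [smul_eq_mul, mem_ofPred_eq, ← hD] at hconv hle
    refine le_of_mul_le_mul_left ?_ ht.1
    nlinarith
  have hlim : Tendsto (fun t : ℝ => φ x - (1 - t) * D) (𝓝[>] 0) (𝓝 (φ x - (1 - 0) * D)) :=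
    ((continuous_const.sub ((continuous_const.sub continuous_id).mul continuous_const)).tendsto
      0).mono_left nhdsWithin_le_nhds
  have := ge_of_tendsto hlim (eventually_of_mem (Ioo_mem_nhdsGT one_pos) hsegment)
  rw [norm_sub_rev]
  linarith

section Gradient

variable [CompleteSpace E]

lemma HasGradientAt.hasDerivAt_comp_lineMap {f : E → ℝ} {g x y : E} {t : ℝ}
    (hf : HasGradientAt f g (lineMap y x t)) :
    HasDerivAt (f ∘ lineMap y x) (inner ℝ g (x - y)) t := by
  simpa using hf.hasFDerivAt.comp_hasDerivAt t hasDerivAt_lineMap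

lemma ConvexOn.add_inner_gradient_le {s : Set E} {f : E → ℝ} {g x y : E} (hf : ConvexOn ℝ s f)
    (hx : x ∈ s) (hy : y ∈ s) (hg : HasGradientAt f g y) :
    f y + inner ℝ g (x - y) ≤ f x := by
  have hline : ConvexOn ℝ (lineMap y x ⁻¹' s) (f ∘ lineMap y x) := hf.comp_affineMap _
  have := hline.le_slope_of_hasDerivAt (x := 0) (y := 1) (by simpa using hy) (by simpa using hx)
    one_pos (HasGradientAt.hasDerivAt_comp_lineMap (by simpa using hg))
  simp only [slope_def_field, Function.comp_apply, lineMap_apply_one, lineMap_apply_zero, sub_zero,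
    div_one] at this
  linarith

lemma le_add_inner_gradient_add_sq_norm_of_lipschitz {f : E → ℝ} {f' : E → E} {L : ℝ}
    (hf : ∀ x, HasGradientAt f (f' x) x) (hlip : ∀ u v, ‖f' u - f' v‖ ≤ L * ‖u - v‖)
    (x y : E) :
    f x ≤ f y + inner ℝ (f' y) (x - y) + L / 2 * ‖x - y‖ ^ 2 := by
  set d := x - y
  set h : ℝ → ℝ := fun t =>
    f (lineMap y x t) - t * inner ℝ (f' y) d - L / 2 * t ^ 2 * ‖d‖ ^ 2
  have hderiv : ∀ t, HasDerivAt h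
      (inner ℝ (f' (lineMap y x t)) d - inner ℝ (f' y) d - L * t * ‖d‖ ^ 2) t := by
    intro t
    have := (((hf (lineMap y x t)).hasDerivAt_comp_lineMap).sub ((hasDerivAt_id t).mul_const
      (inner ℝ (f' y) d))).sub (((hasDerivAt_pow 2 t).const_mul (L / 2)).mul_const (‖d‖ ^ 2))
    exact this.congr_deriv (by simp only [d, one_mul, Nat.cast_ofNat]; ring)
  have hnonpos : ∀ t ∈ interior (Icc (0 : ℝ) 1),
      inner ℝ (f' (lineMap y x t)) d - inner ℝ (f' y) d - L * t * ‖d‖ ^ 2 ≤ 0 := by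
    intro t ht
    rw [interior_Icc] at ht
    have hdist : ‖lineMap y x t - y‖ = t * ‖d‖ := by
      rw [← dist_eq_norm, dist_lineMap_left, Real.norm_of_nonneg ht.1.le, dist_eq_norm,
        norm_sub_rev]
    calc inner ℝ (f' (lineMap y x t)) d - inner ℝ (f' y) d - L * t * ‖d‖ ^ 2
        = inner ℝ (f' (lineMap y x t) - f' y) d - L * t * ‖d‖ ^ 2 := by rw [inner_sub_left]
      _ ≤ ‖f' (lineMap y x t) - f' y‖ * ‖d‖ - L * t * ‖d‖ ^ 2 := by
        gcongr; exact real_inner_le_norm _ _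
      _ ≤ L * ‖lineMap y x t - y‖ * ‖d‖ - L * t * ‖d‖ ^ 2 := by
        gcongr; exact hlip _ _
      _ = 0 := by rw [hdist]; ring
  have hanti : AntitoneOn h (Icc 0 1) :=
    antitoneOn_of_hasDerivWithinAt_nonpos (convex_Icc 0 1)
      (fun t _ => (hderiv t).continuousAt.continuousWithinAt)
      (fun t _ => (hderiv t).hasDerivWithinAt) hnonpos
  have := hanti (left_mem_Icc.2 zero_le_one) (right_mem_Icc.2 zero_le_one) zero_le_one
  simp only [h, lineMap_apply_one, lineMap_apply_zero] at this
  linarith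

end Gradient

lemma neg_le_ciInf_sub_ciInf {ι : Type*} [Finite ι] [Nonempty ι] {a b : ι → ℝ} {R : ℝ}
    (h : ∀ i, b i ≤ a i + R) : -R ≤ (⨅ i, a i) - ⨅ i, b i := by
  obtain ⟨j, hj⟩ := Finite.exists_min a
  have := ciInf_le (Set.finite_range b).bddBelow j
  have := le_ciInf hj
  linarith [h j]

theorem stmt_19_general (n m : ℕ) (hm : 0 < m) (L : ℝ) (hL : 0 < L)
    (f g : Fin m → EuclideanSpace ℝ (Fin n) → ℝ)
    (f' : Fin m → EuclideanSpace ℝ (Fin n) → EuclideanSpace ℝ (Fin n))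
    (hf : ∀ i x, HasGradientAt (f i) (f' i x) x)
    (hfconv : ∀ i, ConvexOn ℝ Set.univ (f i))
    (hlip : ∀ i x y, ‖f' i x - f' i y‖ ≤ L * ‖x - y‖)
    (hg : ∀ i, ConvexOn ℝ Set.univ (g i))
    (F : Fin m → EuclideanSpace ℝ (Fin n) → ℝ) (hF : ∀ i x, F i x = f i x + g i x)
    (s : ℝ) (hs0 : 0 < s) (hsL : s ≤ 1 / L)
    (xk yk x₁ : EuclideanSpace ℝ (Fin n))
    (φ : EuclideanSpace ℝ (Fin n) → ℝ)
    (hφ : ∀ z, φ z = (⨆ i : Fin m, ((inner ℝ (f' i yk) (z - yk) : ℝ) + g i z + f i yk - F i xk))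
        + (1 / (2 * s)) * ‖z - yk‖ ^ 2)
    (hmin : ∀ w, φ x₁ ≤ φ w) :
    ∀ z : EuclideanSpace ℝ (Fin n),
      (⨅ i : Fin m, (F i xk - F i z)) - (⨅ i : Fin m, (F i x₁ - F i z)) ≥
        -(1 / (2 * s)) * (2 * (inner ℝ (yk - x₁) (yk - xk) : ℝ) + ‖x₁ - yk‖ ^ 2) := by
  intro z
  have : Nonempty (Fin m) := ⟨⟨0, hm⟩⟩
  have hLc : L / 2 ≤ 1 / (2 * s) := by
    calc L / 2 = 1 / (2 * (1 / L)) := by field_simp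
      _ ≤ 1 / (2 * s) := by gcongr
  set c := 1 / (2 * s)
  set Θ := fun i w => inner ℝ (f' i yk) (w - yk) + g i w + f i yk - F i xk
  have hΘ_le : ∀ i w, Θ i w ≤ ⨆ j, Θ j w := fun i w =>
    le_ciSup (f := fun j => Θ j w) (Set.finite_range _).bddAbove i
  have hφ_strong : StrongConvexOn univ (2 * c) φ := by
    rw [show φ = fun w => (⨆ i, Θ i w) + c * ‖w - yk‖ ^ 2 from funext hφ]
    refine (ConvexOn.ciSup fun i => ?_).strongConvexOn_add_sq_norm_sub c yk
    exact (((convexOn_inner_sub _ _).add (hg i)).add_const (f i yk - F i xk)).congr fun w _ => by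
      simp only [Θ, Pi.add_apply]; ring
  have hdescent : ∀ i, F i x₁ - F i xk ≤ φ x₁ := fun i => by
    have := le_add_inner_gradient_add_sq_norm_of_lipschitz (hf i) (hlip i) x₁ yk
    rw [hφ, hF]
    nlinarith [hΘ_le i x₁, sq_nonneg ‖x₁ - yk‖]
  have hφ_xk : φ xk ≤ c * ‖xk - yk‖ ^ 2 := by
    have : (⨆ i, Θ i xk) ≤ 0 := ciSup_le fun i => by
      have := (hfconv i).add_inner_gradient_le (mem_univ xk) (mem_univ yk) (hf i yk)
      simp only [Θ, hF]
      linarith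
    rw [hφ]
    linarith
  have hprox := hφ_strong.add_sq_norm_sub_le_of_isMinOn (mem_univ x₁) (fun w _ => hmin w)
    (mem_univ xk)
  have hpolar :
      ‖xk - x₁‖ ^ 2 = ‖x₁ - yk‖ ^ 2 - 2 * inner ℝ (yk - x₁) (yk - xk) + ‖xk - yk‖ ^ 2 := by
    rw [norm_sub_rev x₁ yk, norm_sub_rev xk yk, ← norm_sub_sq_real, sub_sub_sub_cancel_left]
  rw [neg_mul]
  refine neg_le_ciInf_sub_ciInf fun i => ?_
  nlinarith [hdescent i, sq_nonneg ‖x₁ - yk‖, show 0 < c by positivity]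

theorem stmt_19 (n m : ℕ) (hm : 0 < m) (L : ℝ) (hL : 0 < L)
    (f g : Fin m → EuclideanSpace ℝ (Fin n) → ℝ)
    (f' : Fin m → EuclideanSpace ℝ (Fin n) → EuclideanSpace ℝ (Fin n))
    (hf : ∀ i x, HasGradientAt (f i) (f' i x) x)
    (hfconv : ∀ i, ConvexOn ℝ Set.univ (f i))
    (hlip : ∀ i x y, ‖f' i x - f' i y‖ ≤ L * ‖x - y‖)
    (hg : ∀ i, ConvexOn ℝ Set.univ (g i))
    (F : Fin m → EuclideanSpace ℝ (Fin n) → ℝ) (hF : ∀ i x, F i x = f i x + g i x)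
    (s : ℝ) (hs0 : 0 < s) (hsL : s ≤ 1 / L)
    (xk yk x₁ : EuclideanSpace ℝ (Fin n))
    (φ : EuclideanSpace ℝ (Fin n) → ℝ)
    (hφ : ∀ z, φ z = (⨆ i : Fin m, ((inner ℝ (f' i yk) (z - yk) : ℝ) + g i z + f i yk - F i xk))
        + (1 / (2 * s)) * ‖z - yk‖ ^ 2)
    (hmin : ∀ w, φ x₁ ≤ φ w)
    (lam : Fin m → ℝ) (hlam : ∀ i, 0 ≤ lam i) (hlamsum : ∑ i, lam i = 1)
    (gt : Fin m → EuclideanSpace ℝ (Fin n))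
    (hsub : ∀ i w, g i x₁ + (inner ℝ (gt i) (w - x₁) : ℝ) ≤ g i w)
    (hkkt : ∑ i, lam i • (f' i yk + gt i) = -(1 / s) • (x₁ - yk))
    (hactive : ∀ j, ((inner ℝ (f' j yk) (x₁ - yk) : ℝ) + g j x₁ + f j yk - F j xk)
        ≠ (⨅ i : Fin m, ((inner ℝ (f' i yk) (x₁ - yk) : ℝ) + g i x₁ + f i yk - F i xk))
      → lam j = 0) :
    ∀ z : EuclideanSpace ℝ (Fin n),
      (⨅ i : Fin m, (F i xk - F i z)) - (⨅ i : Fin m, (F i x₁ - F i z)) ≥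
        -(1 / (2 * s)) * (2 * (inner ℝ (yk - x₁) (yk - xk) : ℝ) + ‖x₁ - yk‖ ^ 2) :=
  stmt_19_general n m hm L hL f g f' hf hfconv hlip hg F hF s hs0 hsL xk yk x₁ φ hφ hmin
end
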